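/- arXiv:1910.00537 — 6 statements merged into one kernel-verified Lean document; each statement's English description precedes it below -/
import Mathlib

section
/- Let n ≥ 2, let v ∈ ℝⁿ be a column vector and w ∈ ℝⁿ a row covector with w·v = 1, and let Ω := Iₙ − v wᵀ. Let p be a real n×(n−1) matrix with wᵀ p = 0 (each column of p is annihilated by w) and rank(p) = n−1, and let Π be a real (n−1)×n matrix with rank(Π Ω) = n−1. Then the (n−1)×(n−1) matrix Π p is invertible. -/
open Matrix

lemma vecMulVec_mulVec' {n : ℕ} (v w y : Fin n → ℝ) :
    (vecMulVec v w) *ᵥ y = (w ⬝ᵥ y) • v := by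
  funext i
  simp [vecMulVec, mulVec, dotProduct, Finset.mul_sum, mul_comm, mul_left_comm]

/-- Appendix A (Lemma 2): if `p` is a rank-`(n−1)` matrix whose columns are annihilated
by `w`, and `Π Ω` has rank `n−1` where `Ω = I − v wᵀ` and `w ⬝ᵥ v = 1`, then `Π p` is
invertible. -/
theorem pi_p_invertible (n : ℕ) (hn : 2 ≤ n)
    (v w : Fin n → ℝ) (hwv : w ⬝ᵥ v = 1)
    (p : Matrix (Fin n) (Fin (n - 1)) ℝ)
    (hwp : w ᵥ* p = 0) (hrankp : p.rank = n - 1)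
    (Pm : Matrix (Fin (n - 1)) (Fin n) ℝ)
    (hrank : (Pm * ((1 : Matrix (Fin n) (Fin n) ℝ) - vecMulVec v w)).rank = n - 1) :
    IsUnit (Pm * p) := by
  set Ω : Matrix (Fin n) (Fin n) ℝ := (1 : Matrix (Fin n) (Fin n) ℝ) - vecMulVec v w with hΩ
  -- kernel of (Pm * Ω) has dimension 1
  have hvne : v ≠ 0 := by
    intro h
    simp [h] at hwv
  have hker1 : Module.finrank ℝ (LinearMap.ker (Pm * Ω).mulVecLin) = 1 := by
    have h := LinearMap.finrank_range_add_finrank_ker (Pm * Ω).mulVecLin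
    rw [Module.finrank_fin_fun] at h
    have hr : Module.finrank ℝ (LinearMap.range (Pm * Ω).mulVecLin) = n - 1 := hrank
    omega
  have hvker : v ∈ LinearMap.ker (Pm * Ω).mulVecLin := by
    have : Ω *ᵥ v = 0 := by
      rw [hΩ, sub_mulVec, one_mulVec, vecMulVec_mulVec', hwv, one_smul, sub_self]
    simp [LinearMap.mem_ker, mulVecLin_apply, ← mulVec_mulVec, this]
  have hspan : (ℝ ∙ v) = LinearMap.ker (Pm * Ω).mulVecLin := by
    apply Submodule.eq_of_le_of_finrank_le
    · exact Submodule.span_le.mpr (by simpa using hvker)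
    · rw [hker1, finrank_span_singleton hvne]
  -- p is injective
  have hpker : LinearMap.ker p.mulVecLin = ⊥ := by
    have h := LinearMap.finrank_range_add_finrank_ker p.mulVecLin
    rw [Module.finrank_fin_fun] at h
    have hr : Module.finrank ℝ (LinearMap.range p.mulVecLin) = n - 1 := hrankp
    have : Module.finrank ℝ (LinearMap.ker p.mulVecLin) = 0 := by omega
    exact Submodule.finrank_eq_zero.mp this
  -- now show det ≠ 0 via no nonzero kernel vector
  rw [isUnit_iff_isUnit_det, isUnit_iff_ne_zero]
  intro hdet
  obtain ⟨x, hx0, hx⟩ := (Matrix.exists_mulVec_eq_zero_iff).mpr hdet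
  set y : Fin n → ℝ := p *ᵥ x with hy
  have hwy : w ⬝ᵥ y = 0 := by
    rw [hy, dotProduct_mulVec, hwp, zero_dotProduct]
  have hΩy : Ω *ᵥ y = y := by
    rw [hΩ, sub_mulVec, one_mulVec, vecMulVec_mulVec', hwy, zero_smul, sub_zero]
  have hyker : y ∈ LinearMap.ker (Pm * Ω).mulVecLin := by
    have : (Pm * p) *ᵥ x = Pm *ᵥ y := by rw [hy, mulVec_mulVec]
    simp [LinearMap.mem_ker, mulVecLin_apply, ← mulVec_mulVec, hΩy, ← this, hx]
  rw [← hspan] at hyker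
  obtain ⟨c, hc⟩ := Submodule.mem_span_singleton.mp hyker
  have hc0 : c = 0 := by
    have := hwy
    rw [← hc] at this
    simpa [dotProduct_smul, hwv] using this
  have hy0 : y = 0 := by rw [← hc, hc0, zero_smul]
  have : x ∈ LinearMap.ker p.mulVecLin := by simp [LinearMap.mem_ker, mulVecLin_apply, ← hy, hy0]
  rw [hpker] at this
  exact hx0 (by simpa using this)
end

section
/- Let α, β, γ : ℝ → ℝ be continuous on an interval [s₀, s₁], with α differentiable on [s₀, s₁], α' continuous, and α(s) ≠ 0 for all s ∈ [s₀, s₁]. Let ρ : ℝ → ℝ be differentiable on [s₀, s₁] and satisfy α(s) ρ(s) ρ'(s) + β(s) ρ(s)² + γ(s) = 0 for all s ∈ [s₀, s₁]. Define δ := β − α' and Ψ(s) := ∫_{s₀}^{s} 2δ(σ)/α(σ) dσ. Then the function E(s) := (1/2) exp(Ψ(s)) α(s)² ρ(s)² satisfies E'(s) = −exp(Ψ(s)) α(s) γ(s) for all s ∈ (s₀, s₁). -/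
open intervalIntegral

/-! The ODE `α ρ ρ' + β ρ² + γ = 0` makes `Ψ' = 2(β - α')/α` an integrating factor: differentiating
`½ e^Ψ α² ρ²` gives `e^Ψ α ρ (α ρ' + β ρ)`, and the ODE turns `α ρ (α ρ' + β ρ)` into `-α γ`. -/

theorem hasDerivAt_integral_of_continuousOn_Icc {f : ℝ → ℝ} {a b x : ℝ}
    (hf : ContinuousOn f (Set.Icc a b)) (hx : x ∈ Set.Ioo a b) :
    HasDerivAt (fun u => ∫ t in a..u, f t) (f x) x := by
  have hnhds : Set.Icc a b ∈ nhds x := Icc_mem_nhds hx.1 hx.2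
  have hint : IntervalIntegrable f MeasureTheory.volume a x :=
    (hf.mono (by simpa [Set.uIcc_of_le hx.1.le] using
      Set.Icc_subset_Icc_right hx.2.le)).intervalIntegrable
  exact integral_hasDerivAt_right hint
    ⟨Set.Icc a b, hnhds, hf.aestronglyMeasurable measurableSet_Icc⟩ (hf.continuousAt hnhds)

theorem hasDerivAt_half_exp_mul_sq_mul_sq {Ψ α ρ : ℝ → ℝ} {α' ρ' β γ x : ℝ}
    (hΨ : HasDerivAt Ψ (2 * (β - α') / α x) x) (hα : HasDerivAt α α' x)
    (hρ : HasDerivAt ρ ρ' x) (hαx : α x ≠ 0)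
    (heq : α x * ρ x * ρ' + β * ρ x ^ 2 + γ = 0) :
    HasDerivAt (fun u => 1 / 2 * Real.exp (Ψ u) * α u ^ 2 * ρ u ^ 2)
      (-(Real.exp (Ψ x) * α x * γ)) x := by
  have hcancel : 2 * (β - α') / α x * α x = 2 * (β - α') := div_mul_cancel₀ _ hαx
  refine (((hΨ.exp.const_mul (1 / 2)).mul (hα.pow 2)).mul (hρ.pow 2)).congr_deriv ?_
  simp only [Pi.mul_apply, Pi.pow_apply]
  linear_combination (1 / 2 * Real.exp (Ψ x) * α x * ρ x ^ 2) * hcancel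
    + Real.exp (Ψ x) * α x * heq

theorem reduced_dynamics_energy_derivative_general
    (α β γ ρ α' ρ' : ℝ → ℝ) (s₀ s₁ : ℝ)
    (hαc : ContinuousOn α (Set.Icc s₀ s₁))
    (hβc : ContinuousOn β (Set.Icc s₀ s₁))
    (hα : ∀ x ∈ Set.Icc s₀ s₁, HasDerivAt α (α' x) x)
    (hα'c : ContinuousOn α' (Set.Icc s₀ s₁))
    (hαne : ∀ x ∈ Set.Icc s₀ s₁, α x ≠ 0)
    (hρ : ∀ x ∈ Set.Icc s₀ s₁, HasDerivAt ρ (ρ' x) x)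
    (heq : ∀ x ∈ Set.Icc s₀ s₁,
      α x * ρ x * ρ' x + β x * (ρ x) ^ 2 + γ x = 0) :
    ∀ x ∈ Set.Ioo s₀ s₁,
      HasDerivAt
        (fun u => (1 / 2) * Real.exp (∫ σ in s₀..u, 2 * (β σ - α' σ) / α σ)
          * (α u) ^ 2 * (ρ u) ^ 2)
        (-(Real.exp (∫ σ in s₀..x, 2 * (β σ - α' σ) / α σ) * α x * γ x)) x := by
  intro x hx
  have hxI : x ∈ Set.Icc s₀ s₁ := Set.Ioo_subset_Icc_self hx
  have hΨ := hasDerivAt_integral_of_continuousOn_Icc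
    (f := fun σ => 2 * (β σ - α' σ) / α σ)
    ((continuousOn_const.mul (hβc.sub hα'c)).div hαc hαne) hx
  exact hasDerivAt_half_exp_mul_sq_mul_sq hΨ (hα x hxI) (hρ x hxI) (hαne x hxI) (heq x hxI)

/-- Integrability of the reduced dynamics (differential form of equation (15)): along a
solution `ṡ = ρ(s)` of `α s̈ + β ṡ² + γ = 0`, the energy-like function
`E(s) = ½ exp(Ψ(s)) α(s)² ρ(s)²`, with `Ψ(s) = ∫_{s₀}^{s} 2(β−α')/α`, satisfies
`E' = −exp(Ψ) α γ` on the open interval. -/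
theorem reduced_dynamics_energy_derivative
    (α β γ ρ α' ρ' : ℝ → ℝ) (s₀ s₁ : ℝ) (hlt : s₀ < s₁)
    (hαc : ContinuousOn α (Set.Icc s₀ s₁))
    (hβc : ContinuousOn β (Set.Icc s₀ s₁))
    (hγc : ContinuousOn γ (Set.Icc s₀ s₁))
    (hα : ∀ x ∈ Set.Icc s₀ s₁, HasDerivAt α (α' x) x)
    (hα'c : ContinuousOn α' (Set.Icc s₀ s₁))
    (hαne : ∀ x ∈ Set.Icc s₀ s₁, α x ≠ 0)
    (hρ : ∀ x ∈ Set.Icc s₀ s₁, HasDerivAt ρ (ρ' x) x)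
    (heq : ∀ x ∈ Set.Icc s₀ s₁,
      α x * ρ x * ρ' x + β x * (ρ x) ^ 2 + γ x = 0) :
    ∀ x ∈ Set.Ioo s₀ s₁,
      HasDerivAt
        (fun u => (1 / 2) * Real.exp (∫ σ in s₀..u, 2 * (β σ - α' σ) / α σ)
          * (α u) ^ 2 * (ρ u) ^ 2)
        (-(Real.exp (∫ σ in s₀..x, 2 * (β σ - α' σ) / α σ) * α x * γ x)) x :=
  reduced_dynamics_energy_derivative_general α β γ ρ α' ρ' s₀ s₁ hαc hβc hα hα'c hαne hρ heq
end

section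
/- Let α, β, γ : ℝ → ℝ be continuous on an interval [s₀, s₁], with α differentiable on [s₀, s₁], α' continuous, and α(s) ≠ 0 for all s ∈ [s₀, s₁]. Let ρ : ℝ → ℝ be differentiable on [s₀, s₁] and satisfy α(s) ρ(s) ρ'(s) + β(s) ρ(s)² + γ(s) = 0 for all s ∈ [s₀, s₁]. Define δ := β − α' and Ψ(s) := ∫_{s₀}^{s} 2δ(σ)/α(σ) dσ. Then for every s ∈ [s₀, s₁]: (1/2) exp(Ψ(s)) α(s)² ρ(s)² − (1/2) α(s₀)² ρ(s₀)² + ∫_{s₀}^{s} exp(Ψ(τ)) α(τ) γ(τ) dτ = 0. -/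
open intervalIntegral

/-- Equation (15): integral (conserved-quantity) identity for the reduced dynamics
`α s̈ + β ṡ² + γ = 0` along a solution with `ṡ = ρ(s)`, where
`Ψ(s) = ∫_{s₀}^{s} 2(β−α')/α`. -/
theorem reduced_dynamics_integral_identity
    (α β γ ρ α' ρ' : ℝ → ℝ) (s₀ s₁ : ℝ) (hlt : s₀ < s₁)
    (hαc : ContinuousOn α (Set.Icc s₀ s₁))
    (hβc : ContinuousOn β (Set.Icc s₀ s₁))
    (hγc : ContinuousOn γ (Set.Icc s₀ s₁))
    (hα : ∀ x ∈ Set.Icc s₀ s₁, HasDerivAt α (α' x) x)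
    (hα'c : ContinuousOn α' (Set.Icc s₀ s₁))
    (hαne : ∀ x ∈ Set.Icc s₀ s₁, α x ≠ 0)
    (hρ : ∀ x ∈ Set.Icc s₀ s₁, HasDerivAt ρ (ρ' x) x)
    (heq : ∀ x ∈ Set.Icc s₀ s₁,
      α x * ρ x * ρ' x + β x * (ρ x) ^ 2 + γ x = 0) :
    ∀ s ∈ Set.Icc s₀ s₁,
      (1 / 2) * Real.exp (∫ σ in s₀..s, 2 * (β σ - α' σ) / α σ)
          * (α s) ^ 2 * (ρ s) ^ 2
        - (1 / 2) * (α s₀) ^ 2 * (ρ s₀) ^ 2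
        + ∫ τ in s₀..s,
            Real.exp (∫ σ in s₀..τ, 2 * (β σ - α' σ) / α σ) * α τ * γ τ = 0 := by
  intro s hs
  set g : ℝ → ℝ := fun σ => 2 * (β σ - α' σ) / α σ with hg_def
  set Ψ : ℝ → ℝ := fun x => ∫ σ in s₀..x, g σ with hΨ_def
  -- continuity of g on Icc
  have hgc : ContinuousOn g (Set.Icc s₀ s₁) := by
    exact ((continuousOn_const.mul (hβc.sub hα'c)).div hαc hαne)
  have hIccsub : Set.Icc s₀ s ⊆ Set.Icc s₀ s₁ := Set.Icc_subset_Icc le_rfl hs.2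
  have huIcc : Set.uIcc s₀ s ⊆ Set.Icc s₀ s₁ := by
    rw [Set.uIcc_of_le hs.1]; exact hIccsub
  -- continuity of ρ on Icc
  have hρc : ContinuousOn ρ (Set.Icc s₀ s₁) :=
    fun x hx => ((hρ x hx).continuousAt).continuousWithinAt
  -- Ψ is continuous on Icc s₀ s₁
  have hgint : MeasureTheory.IntegrableOn g (Set.uIcc s₀ s₁) :=
    (hgc.mono (by rw [Set.uIcc_of_le hlt.le])).integrableOn_compact isCompact_uIcc
  have hΨc : ContinuousOn Ψ (Set.Icc s₀ s₁) := by
    have := intervalIntegral.continuousOn_primitive_interval (a := s₀) (b := s₁)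
      (f := g) (μ := MeasureTheory.volume) hgint
    rwa [Set.uIcc_of_le hlt.le] at this
  -- the "energy" function
  set F : ℝ → ℝ := fun x => (1 / 2) * Real.exp (Ψ x) * (α x) ^ 2 * (ρ x) ^ 2 with hF_def
  have hFc : ContinuousOn F (Set.Icc s₀ s₁) :=
    ((continuousOn_const.mul (Real.continuous_exp.comp_continuousOn hΨc)).mul
      (hαc.pow 2)).mul (hρc.pow 2)
  -- integrand
  set h : ℝ → ℝ := fun τ => Real.exp (Ψ τ) * α τ * γ τ with hh_def
  have hhc : ContinuousOn h (Set.Icc s₀ s₁) :=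
    ((Real.continuous_exp.comp_continuousOn hΨc).mul hαc).mul hγc
  have hhint : IntervalIntegrable h MeasureTheory.volume s₀ s :=
    (hhc.mono huIcc).intervalIntegrable
  -- derivative of F at interior points
  have hderiv : ∀ x ∈ Set.Ioo s₀ s, HasDerivAt F (-h x) x := by
    intro x hx
    have hxI : x ∈ Set.Icc s₀ s₁ := hIccsub (Set.Ioo_subset_Icc_self hx)
    have hxO : x ∈ Set.Ioo s₀ s₁ := ⟨hx.1, lt_of_lt_of_le hx.2 hs.2⟩
    have hmem : Set.Ioo s₀ s₁ ∈ nhds x := (isOpen_Ioo).mem_nhds hxO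
    have hgat : ContinuousAt g x :=
      (hgc.continuousAt (Filter.mem_of_superset hmem Set.Ioo_subset_Icc_self))
    have hgint' : IntervalIntegrable g MeasureTheory.volume s₀ x :=
      (hgc.mono (by rw [Set.uIcc_of_le hxI.1]; exact Set.Icc_subset_Icc le_rfl hxI.2)).intervalIntegrable
    have hΨd : HasDerivAt Ψ (g x) x :=
      intervalIntegral.integral_hasDerivAt_right hgint'
        (ContinuousOn.stronglyMeasurableAtFilter isOpen_Ioo
          (hgc.mono Set.Ioo_subset_Icc_self) x hxO)
        hgat
    have hαd := hα x hxI
    have hρd := hρ x hxI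
    have hd : HasDerivAt F
        ((((1 / 2 * (Real.exp (Ψ x) * g x)) * (α x) ^ 2
            + (1 / 2 * Real.exp (Ψ x)) * (2 * α x ^ (2 - 1) * α' x)) * (ρ x) ^ 2)
          + ((1 / 2 * Real.exp (Ψ x)) * (α x) ^ 2) * (2 * ρ x ^ (2 - 1) * ρ' x)) x := by
      exact ((((hΨd.exp.const_mul (1/2)).mul (hαd.pow 2)).mul (hρd.pow 2)))
    convert hd using 1
    have hα0 := hαne x hxI
    have he := heq x hxI
    have hgval : g x * α x ^ 2 = 2 * (β x - α' x) * α x := by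
      show 2 * (β x - α' x) / α x * α x ^ 2 = _; field_simp
    show -(Real.exp (Ψ x) * α x * γ x) = _
    linear_combination (-1/2 * Real.exp (Ψ x) * ρ x ^ 2) * hgval
      + (-(Real.exp (Ψ x) * α x)) * he
  -- fundamental theorem of calculus
  have key : ∫ τ in s₀..s, -h τ = F s - F s₀ := by
    apply intervalIntegral.integral_eq_sub_of_hasDeriv_right_of_le hs.1
      (hFc.mono hIccsub)
      (fun x hx => (hderiv x hx).hasDerivWithinAt)
      hhint.neg
  have hΨ0 : Ψ s₀ = 0 := intervalIntegral.integral_same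
  have hF0 : F s₀ = (1 / 2) * (α s₀) ^ 2 * (ρ s₀) ^ 2 := by
    simp [hF_def, hΨ0]
  rw [intervalIntegral.integral_neg] at key
  show F s - (1 / 2) * (α s₀) ^ 2 * (ρ s₀) ^ 2 + ∫ τ in s₀..s, h τ = 0
  rw [← hF0]
  linarith
end

section
/- Let n, m ≥ 1 and let Ω, A, R, Rd, Q be real n×n matrices, B a real n×m matrix, Γ a real m×m matrix, and κ ≥ 0 a real number, such that: Q is symmetric positive definite; Γ is symmetric positive definite; R is symmetric positive semidefinite; and the projected Riccati identity Ωᵀ (Rd + Aᵀ R + R A + Q + κ R − R B Γ⁻¹ Bᵀ R) Ω = 0 holds. Let w ∈ ℝⁿ satisfy Ω w = w and w ≠ 0. Then, with the closed-loop matrix A_cl := A − B Γ⁻¹ Bᵀ R, one has wᵀ (Rd + A_clᵀ R + R A_cl) w = −wᵀ (Q + κ R + R B Γ⁻¹ Bᵀ R) w < 0. -/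
/-!
Since `Ω w = w`, the projected Riccati identity gives `wᵀ(Rd + AᵀR + RA + Q + κR − S)w = 0` with
`S = RBΓ⁻¹BᵀR`. The feedback `−Γ⁻¹BᵀR` changes `AᵀR + RA` by `−2S`, which turns the quadratic
term `−S` into `+S`; the resulting form `Q + κR + S` is positive definite because `Q` is and
`κR`, `S` are positive semidefinite.
-/

open Matrix

namespace Matrix

variable {ι κ α : Type*} [Fintype ι] [Fintype κ]

theorem dotProduct_transpose_mul_mul_mulVec [CommSemiring α] (P M : Matrix ι ι α) (w : ι → α) :
    w ⬝ᵥ ((Pᵀ * M * P) *ᵥ w) = (P *ᵥ w) ⬝ᵥ (M *ᵥ (P *ᵥ w)) := by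
  rw [← mulVec_mulVec, ← mulVec_mulVec, dotProduct_mulVec, vecMul_transpose]

theorem closedLoop_transpose_mul_add_mul [CommRing α] {R : Matrix ι ι α} {K : Matrix κ κ α}
    (hR : R.IsSymm) (hK : K.IsSymm) (A : Matrix ι ι α) (B : Matrix ι κ α) :
    (A - B * K * Bᵀ * R)ᵀ * R + R * (A - B * K * Bᵀ * R) =
      Aᵀ * R + R * A - 2 • (R * B * K * Bᵀ * R) := by
  simp only [transpose_sub, transpose_mul, transpose_transpose, hR.eq, hK.eq, sub_mul, mul_sub,
    Matrix.mul_assoc, two_smul]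
  abel

theorem PosSemidef.mul_mul_mul_transpose_mul_same [CommRing α] [PartialOrder α] [StarRing α]
    [TrivialStar α] {R : Matrix ι ι α} {K : Matrix κ κ α} (hR : R.IsSymm) (hK : K.PosSemidef)
    (B : Matrix ι κ α) : (R * B * K * Bᵀ * R).PosSemidef := by
  have h := hK.mul_mul_conjTranspose_same (R * B)
  rwa [conjTranspose_eq_transpose_of_trivial, transpose_mul, hR.eq, ← Matrix.mul_assoc] at h

end Matrix

theorem projected_riccati_lyapunov_core_general (n m : ℕ)
    (Om A R Rd Q : Matrix (Fin n) (Fin n) ℝ)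
    (B : Matrix (Fin n) (Fin m) ℝ) (Γ : Matrix (Fin m) (Fin m) ℝ)
    (κ : ℝ) (hκ : 0 ≤ κ)
    (hQ : Q.PosDef) (hΓ : Γ.PosDef) (hR : R.PosSemidef)
    (hRic : Omᵀ * (Rd + Aᵀ * R + R * A + Q + κ • R - R * B * Γ⁻¹ * Bᵀ * R) * Om = 0)
    (w : Fin n → ℝ) (hw : Om *ᵥ w = w) (hwne : w ≠ 0) :
    w ⬝ᵥ ((Rd + (A - B * Γ⁻¹ * Bᵀ * R)ᵀ * R + R * (A - B * Γ⁻¹ * Bᵀ * R)) *ᵥ w) =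
      -(w ⬝ᵥ ((Q + κ • R + R * B * Γ⁻¹ * Bᵀ * R) *ᵥ w)) ∧
    -(w ⬝ᵥ ((Q + κ • R + R * B * Γ⁻¹ * Bᵀ * R) *ᵥ w)) < 0 := by
  set S := R * B * Γ⁻¹ * Bᵀ * R
  have hRsym : R.IsSymm := isHermitian_iff_isSymm.mp hR.isHermitian
  have hΓsym : Γ⁻¹.IsSymm := isHermitian_iff_isSymm.mp hΓ.inv.isHermitian
  have hRic_w : w ⬝ᵥ ((Rd + Aᵀ * R + R * A + Q + κ • R - S) *ᵥ w) = 0 := by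
    rw [← hw, ← dotProduct_transpose_mul_mul_mulVec, hRic, zero_mulVec, dotProduct_zero]
  have hsplit : Rd + (A - B * Γ⁻¹ * Bᵀ * R)ᵀ * R + R * (A - B * Γ⁻¹ * Bᵀ * R) =
      (Rd + Aᵀ * R + R * A + Q + κ • R - S) - (Q + κ • R + S) := by
    rw [add_assoc Rd, closedLoop_transpose_mul_add_mul hRsym hΓsym]
    abel
  have hpos : (Q + κ • R + S).PosDef := by
    rw [add_assoc]
    exact hQ.add_posSemidef <|
      (hR.smul hκ).add <| hΓ.posSemidef.inv.mul_mul_mul_transpose_mul_same hRsym B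
  refine ⟨?_, neg_neg_of_pos (by simpa using hpos.dotProduct_mulVec_pos hwne)⟩
  rw [hsplit, sub_mulVec, dotProduct_sub, hRic_w, zero_sub]

/-- Pointwise algebraic core of Theorem 1: if `R` is symmetric PSD and satisfies the
projected Riccati identity `Ωᵀ(Rd + AᵀR + RA + Q + κR − RBΓ⁻¹BᵀR)Ω = 0`, then for any
nonzero `w` with `Ω w = w`, the closed-loop matrix `A_cl = A − BΓ⁻¹BᵀR` satisfies
`wᵀ(Rd + A_clᵀR + RA_cl)w = −wᵀ(Q + κR + RBΓ⁻¹BᵀR)w < 0`. -/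
theorem projected_riccati_lyapunov_core (n m : ℕ) (hn : 1 ≤ n) (hm : 1 ≤ m)
    (Om A R Rd Q : Matrix (Fin n) (Fin n) ℝ)
    (B : Matrix (Fin n) (Fin m) ℝ) (Γ : Matrix (Fin m) (Fin m) ℝ)
    (κ : ℝ) (hκ : 0 ≤ κ)
    (hQ : Q.PosDef) (hΓ : Γ.PosDef) (hR : R.PosSemidef)
    (hRic : Omᵀ * (Rd + Aᵀ * R + R * A + Q + κ • R - R * B * Γ⁻¹ * Bᵀ * R) * Om = 0)
    (w : Fin n → ℝ) (hw : Om *ᵥ w = w) (hwne : w ≠ 0) :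
    w ⬝ᵥ ((Rd + (A - B * Γ⁻¹ * Bᵀ * R)ᵀ * R + R * (A - B * Γ⁻¹ * Bᵀ * R)) *ᵥ w) =
      -(w ⬝ᵥ ((Q + κ • R + R * B * Γ⁻¹ * Bᵀ * R) *ᵥ w)) ∧
    -(w ⬝ᵥ ((Q + κ • R + R * B * Γ⁻¹ * Bᵀ * R) *ᵥ w)) < 0 :=
  projected_riccati_lyapunov_core_general n m Om A R Rd Q B Γ κ hκ hQ hΓ hR hRic w hw hwne
end

section
/- Let n, m ≥ 1, κ ≥ 0, and let Q (n×n) be symmetric positive definite and Γ (m×m) symmetric positive definite. Let ρ : ℝ → ℝ, and let A, Ω, R : ℝ → Mat_{n×n}(ℝ) and B : ℝ → Mat_{n×m}(ℝ) be matrix-valued functions such that R(σ) is symmetric positive semidefinite for every σ, R is differentiable with derivative R', and the projected Riccati identity Ω(σ)ᵀ (R'(σ)ρ(σ) + A(σ)ᵀ R(σ) + R(σ) A(σ) + Q + κ R(σ) − R(σ) B(σ) Γ⁻¹ B(σ)ᵀ R(σ)) Ω(σ) = 0 holds for all σ. Fix t ∈ ℝ and let s : ℝ → ℝ satisfy HasDerivAt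 s (ρ(s(t))) t, and w : ℝ → ℝⁿ satisfy HasDerivAt w ((A(s(t)) − B(s(t)) Γ⁻¹ B(s(t))ᵀ R(s(t))) w(t)) t, together with the transversality conditions Ω(s(t)) w(t) = w(t). Then the function V(τ) := w(τ)ᵀ R(s(τ)) w(τ) satisfies HasDerivAt V (−w(t)ᵀ (Q + κ R(s(t)) + R(s(t)) B(s(t)) Γ⁻¹ B(s(t))ᵀ R(s(t))) w(t)) t, and this derivative is strictly negative whenever w(t) ≠ 0. -/
/-!
Along the closed loop `ẇ = (A - BΓ⁻¹BᵀR) w`, `ṡ = ρ(s)`, the derivative of `wᵀ R(s) w` is the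
quadratic form of `(A - BΓ⁻¹BᵀR)ᵀ R + ρ R' + R (A - BΓ⁻¹BᵀR)`, which equals the Riccati residual
minus `Q + κR + RBΓ⁻¹BᵀR`. The residual's form vanishes at `w = Ω w` since `Ωᵀ (residual) Ω = 0`,
and what is left is minus a positive definite form.
-/

open Matrix

section Deriv

variable {𝕜 ι : Type*} [NontriviallyNormedField 𝕜] [Fintype ι]
  {u v : 𝕜 → ι → 𝕜} {u' v' : ι → 𝕜} {t : 𝕜}

theorem HasDerivAt.dotProduct (hu : HasDerivAt u u' t) (hv : HasDerivAt v v' t) :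
    HasDerivAt (fun τ => u τ ⬝ᵥ v τ) (u' ⬝ᵥ v t + u t ⬝ᵥ v') t := by
  have hu' := hasDerivAt_pi.mp hu
  have hv' := hasDerivAt_pi.mp hv
  have h := HasDerivAt.fun_sum (u := Finset.univ) fun i _ => (hu' i).fun_mul (hv' i)
  rwa [Finset.sum_add_distrib] at h

theorem HasDerivAt.mulVec {M : 𝕜 → Matrix ι ι 𝕜} {M' : Matrix ι ι 𝕜}
    (hM : ∀ i j, HasDerivAt (fun τ => M τ i j) (M' i j) t) (hv : HasDerivAt v v' t) :
    HasDerivAt (fun τ => M τ *ᵥ v τ) (M' *ᵥ v t + M t *ᵥ v') t :=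
  hasDerivAt_pi.mpr fun i => (hasDerivAt_pi.mpr (hM i)).dotProduct hv

end Deriv

namespace Matrix

variable {α ι ι' : Type*} [CommRing α] [Fintype ι] [Fintype ι']

theorem dotProduct_transpose_mul_mul_mulVec_s17 (N : Matrix ι' ι α) (G : Matrix ι' ι' α)
    (x : ι → α) : x ⬝ᵥ ((Nᵀ * G * N) *ᵥ x) = (N *ᵥ x) ⬝ᵥ (G *ᵥ (N *ᵥ x)) := by
  rw [← mulVec_mulVec, ← mulVec_mulVec, dotProduct_mulVec, vecMul_transpose,
    dotProduct_mulVec, dotProduct_mulVec]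

theorem dotProduct_mulVec_eq_zero_of_transpose_mul_mul_eq_zero {P Ω : Matrix ι ι α}
    {w : ι → α} (hP : Ωᵀ * P * Ω = 0) (hw : Ω *ᵥ w = w) : w ⬝ᵥ (P *ᵥ w) = 0 := by
  rw [← hw, ← dotProduct_transpose_mul_mul_mulVec_s17, hP, zero_mulVec, dotProduct_zero]

theorem dotProduct_transpose_mul_add_mul_mulVec (F R D : Matrix ι ι α) (w : ι → α) :
    w ⬝ᵥ ((Fᵀ * R + D + R * F) *ᵥ w)
      = (F *ᵥ w) ⬝ᵥ (R *ᵥ w) + w ⬝ᵥ (D *ᵥ w + R *ᵥ (F *ᵥ w)) := by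
  rw [add_mulVec, add_mulVec, ← mulVec_mulVec, ← mulVec_mulVec, dotProduct_add,
    dotProduct_add, dotProduct_add, dotProduct_mulVec w Fᵀ, vecMul_transpose, add_assoc]

theorem closedLoop_lyapunov_eq (A R D Q : Matrix ι ι α) (B : Matrix ι ι' α)
    (G : Matrix ι' ι' α) (κ : α) (hR : R.IsSymm) (hG : G.IsSymm) :
    (A - B * G * Bᵀ * R)ᵀ * R + D + R * (A - B * G * Bᵀ * R)
      = (D + Aᵀ * R + R * A + Q + κ • R - R * B * G * Bᵀ * R)
        - (Q + κ • R + R * B * G * Bᵀ * R) := by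
  simp only [transpose_sub, transpose_mul, transpose_transpose, hR.eq, hG.eq, Matrix.mul_sub,
    Matrix.sub_mul, Matrix.mul_assoc]
  abel

end Matrix

theorem Matrix.PosDef.add_smul_add_mul_mul_transpose_mul {ι ι' : Type*} [Fintype ι]
    [Fintype ι'] {Q R : Matrix ι ι ℝ} {G : Matrix ι' ι' ℝ} {κ : ℝ} (B : Matrix ι ι' ℝ)
    (hQ : Q.PosDef) (hκ : 0 ≤ κ) (hR : R.PosSemidef) (hG : G.PosSemidef) :
    (Q + κ • R + R * B * G * Bᵀ * R).PosDef := by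
  have hRB : R * B * G * Bᵀ * R = (Bᵀ * R)ᴴ * G * (Bᵀ * R) := by
    simp only [conjTranspose_eq_transpose_of_trivial, transpose_mul, transpose_transpose,
      (isHermitian_iff_isSymm.mp hR.isHermitian).eq, Matrix.mul_assoc]
  rw [hRB]
  exact (hQ.add_posSemidef (hR.smul hκ)).add_posSemidef (hG.conjTranspose_mul_mul_same _)

theorem lyapunov_decrease_transverse_general (n m : ℕ)
    (κ : ℝ) (hκ : 0 ≤ κ)
    (Q : Matrix (Fin n) (Fin n) ℝ) (hQ : Q.PosDef)
    (Γ : Matrix (Fin m) (Fin m) ℝ) (hΓ : Γ.PosDef)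
    (ρ : ℝ → ℝ)
    (A Om R R' : ℝ → Matrix (Fin n) (Fin n) ℝ)
    (B : ℝ → Matrix (Fin n) (Fin m) ℝ)
    (hR : ∀ σ, (R σ).PosSemidef)
    (hR' : ∀ σ, ∀ i j : Fin n, HasDerivAt (fun u => R u i j) (R' σ i j) σ)
    (hRic : ∀ σ, (Om σ)ᵀ *
      (ρ σ • R' σ + (A σ)ᵀ * R σ + R σ * A σ + Q + κ • R σ
        - R σ * B σ * Γ⁻¹ * (B σ)ᵀ * R σ) * Om σ = 0)
    (t : ℝ) (s : ℝ → ℝ) (w : ℝ → Fin n → ℝ)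
    (hs : HasDerivAt s (ρ (s t)) t)
    (hw : HasDerivAt w
      ((A (s t) - B (s t) * Γ⁻¹ * (B (s t))ᵀ * R (s t)) *ᵥ w t) t)
    (htrans : Om (s t) *ᵥ w t = w t) :
    HasDerivAt (fun τ => w τ ⬝ᵥ (R (s τ) *ᵥ w τ))
      (-(w t ⬝ᵥ ((Q + κ • R (s t) + R (s t) * B (s t) * Γ⁻¹ * (B (s t))ᵀ * R (s t))
          *ᵥ w t))) t ∧
    (w t ≠ 0 →
      -(w t ⬝ᵥ ((Q + κ • R (s t) + R (s t) * B (s t) * Γ⁻¹ * (B (s t))ᵀ * R (s t))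
          *ᵥ w t)) < 0) := by
  have hG : Γ⁻¹.PosSemidef := hΓ.posSemidef.inv
  have hRs : ∀ i j, HasDerivAt (fun τ => R (s τ) i j) ((ρ (s t) • R' (s t)) i j) t := by
    intro i j
    rw [Matrix.smul_apply, smul_eq_mul, mul_comm]
    exact (hR' (s t) i j).comp t hs
  refine ⟨(hw.dotProduct (HasDerivAt.mulVec hRs hw)).congr_deriv ?_,
    fun hw0 => neg_neg_iff_pos.mpr ?_⟩
  · rw [← dotProduct_transpose_mul_add_mul_mulVec,
      closedLoop_lyapunov_eq _ _ _ Q _ _ κ (isHermitian_iff_isSymm.mp (hR (s t)).isHermitian)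
        (isHermitian_iff_isSymm.mp hG.isHermitian),
      sub_mulVec, dotProduct_sub,
      dotProduct_mulVec_eq_zero_of_transpose_mul_mul_eq_zero (hRic (s t)) htrans, zero_sub]
  · simpa only [star_trivial] using
      (hQ.add_smul_add_mul_mul_transpose_mul (B (s t)) hκ (hR (s t)) hG).dotProduct_mulVec_pos hw0

/-- Lyapunov argument of Theorem 1: given a symmetric PSD solution `R` of the projected
periodic differential Riccati equation, the function `V(τ) = w(τ)ᵀ R(s(τ)) w(τ)` has, at
time `t` where `ṡ = ρ(s)`, `ẇ = (A − BΓ⁻¹BᵀR)w` and `Ω(s(t)) w(t) = w(t)`, the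
derivative `−w(t)ᵀ(Q + κR + RBΓ⁻¹BᵀR)w(t)`, which is strictly negative if `w(t) ≠ 0`. -/
theorem lyapunov_decrease_transverse (n m : ℕ) (hn : 1 ≤ n) (hm : 1 ≤ m)
    (κ : ℝ) (hκ : 0 ≤ κ)
    (Q : Matrix (Fin n) (Fin n) ℝ) (hQ : Q.PosDef)
    (Γ : Matrix (Fin m) (Fin m) ℝ) (hΓ : Γ.PosDef)
    (ρ : ℝ → ℝ)
    (A Om R R' : ℝ → Matrix (Fin n) (Fin n) ℝ)
    (B : ℝ → Matrix (Fin n) (Fin m) ℝ)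
    (hR : ∀ σ, (R σ).PosSemidef)
    (hR' : ∀ σ, ∀ i j : Fin n, HasDerivAt (fun u => R u i j) (R' σ i j) σ)
    (hRic : ∀ σ, (Om σ)ᵀ *
      (ρ σ • R' σ + (A σ)ᵀ * R σ + R σ * A σ + Q + κ • R σ
        - R σ * B σ * Γ⁻¹ * (B σ)ᵀ * R σ) * Om σ = 0)
    (t : ℝ) (s : ℝ → ℝ) (w : ℝ → Fin n → ℝ)
    (hs : HasDerivAt s (ρ (s t)) t)
    (hw : HasDerivAt w
      ((A (s t) - B (s t) * Γ⁻¹ * (B (s t))ᵀ * R (s t)) *ᵥ w t) t)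
    (htrans : Om (s t) *ᵥ w t = w t) :
    HasDerivAt (fun τ => w τ ⬝ᵥ (R (s τ) *ᵥ w τ))
      (-(w t ⬝ᵥ ((Q + κ • R (s t) + R (s t) * B (s t) * Γ⁻¹ * (B (s t))ᵀ * R (s t))
          *ᵥ w t))) t ∧
    (w t ≠ 0 →
      -(w t ⬝ᵥ ((Q + κ • R (s t) + R (s t) * B (s t) * Γ⁻¹ * (B (s t))ᵀ * R (s t))
          *ᵥ w t)) < 0) :=
  lyapunov_decrease_transverse_general n m κ hκ Q hQ Γ hΓ ρ A Om R R' B hR hR' hRic t s w hs hw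
    htrans
end

section
/- Let g ∈ ℝ, let φ₁, φ₂ : ℝ → ℝ be twice differentiable, and let s : ℝ → ℝ be twice differentiable at t ∈ ℝ. Define x := φ₁ ∘ s and θ := φ₂ ∘ s. If the unactuated pendulum equation θ''(t) + cos(θ(t)) · x''(t) − g · sin(θ(t)) = 0 holds at time t (where ' denotes the time derivative), then α(s(t)) s''(t) + β(s(t)) (s'(t))² + γ(s(t)) = 0, where α(σ) := φ₂'(σ) + φ₁'(σ) cos(φ₂(σ)), β(σ) := φ₂''(σ) + φ₁''(σ) cos(φ₂(σ)), and γ(σ) := −g sin(φ₂(σ)). -/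
lemma second_deriv_comp (φ φ' φ'' s s' : ℝ → ℝ) (t s''t : ℝ)
    (hφ : ∀ σ, HasDerivAt φ (φ' σ) σ)
    (hφ' : ∀ σ, HasDerivAt φ' (φ'' σ) σ)
    (hs : ∀ τ, HasDerivAt s (s' τ) τ)
    (hs' : HasDerivAt s' s''t t) :
    deriv (deriv (φ ∘ s)) t = φ'' (s t) * (s' t) ^ 2 + φ' (s t) * s''t := by
  have h1 : deriv (φ ∘ s) = fun τ => φ' (s τ) * s' τ :=
    funext fun τ => ((hφ (s τ)).comp τ (hs τ)).deriv
  rw [h1]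
  have h2 : HasDerivAt (fun τ => φ' (s τ) * s' τ)
      (φ'' (s t) * s' t * s' t + φ' (s t) * s''t) t :=
    (((hφ' (s t)).comp t (hs t)).mul hs')
  rw [h2.deriv]; ring

/-- Virtual-constraint reduction (equation (18)) for the cart-pendulum: if `x = φ₁ ∘ s`,
`θ = φ₂ ∘ s` satisfy the unactuated equation `θ'' + cos(θ) x'' − g sin(θ) = 0` at time
`t`, then `α(s(t)) s''(t) + β(s(t)) s'(t)² + γ(s(t)) = 0`, where
`α = φ₂' + φ₁' cos φ₂`, `β = φ₂'' + φ₁'' cos φ₂`, `γ = −g sin φ₂`. -/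
theorem cart_pendulum_virtual_constraint_reduction
    (g : ℝ) (φ₁ φ₂ φ₁' φ₂' φ₁'' φ₂'' : ℝ → ℝ)
    (s s' : ℝ → ℝ) (t s''t : ℝ)
    (hφ₁ : ∀ σ, HasDerivAt φ₁ (φ₁' σ) σ)
    (hφ₁' : ∀ σ, HasDerivAt φ₁' (φ₁'' σ) σ)
    (hφ₂ : ∀ σ, HasDerivAt φ₂ (φ₂' σ) σ)
    (hφ₂' : ∀ σ, HasDerivAt φ₂' (φ₂'' σ) σ)
    (hs : ∀ τ, HasDerivAt s (s' τ) τ)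
    (hs' : HasDerivAt s' s''t t)
    (hpend : deriv (deriv (φ₂ ∘ s)) t
        + Real.cos ((φ₂ ∘ s) t) * deriv (deriv (φ₁ ∘ s)) t
        - g * Real.sin ((φ₂ ∘ s) t) = 0) :
    (φ₂' (s t) + φ₁' (s t) * Real.cos (φ₂ (s t))) * s''t
      + (φ₂'' (s t) + φ₁'' (s t) * Real.cos (φ₂ (s t))) * (s' t) ^ 2
      + (-(g * Real.sin (φ₂ (s t)))) = 0 := by
  rw [second_deriv_comp φ₁ φ₁' φ₁'' s s' t s''t hφ₁ hφ₁' hs hs',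
      second_deriv_comp φ₂ φ₂' φ₂'' s s' t s''t hφ₂ hφ₂' hs hs'] at hpend
  simp only [Function.comp_apply] at hpend
  linarith [hpend]
end
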